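/- Let D be a 3-dicritical digraph that is not a bidirected odd cycle. Then the bidirected part B(D) of D is a forest. -/

import Mathlib

/-- A (loopless, simple) digraph on vertex type `V`. -/
structure SimpleDigraph (V : Type) where
  Adj : V → V → Prop
  loopless : ∀ v, ¬ Adj v v

namespace SimpleDigraph

/-- A set of arcs (given as a relation) is acyclic if it admits no directed closed walk. -/
def AcyclicRel {V : Type} (A : V → V → Prop) : Prop :=
  ∀ v, ¬ Relation.TransGen A v v

/-- A set of arcs is 2-dicolourable if the vertices can be coloured with two colours
so that each colour class induces an acyclic subdigraph. -/
def Dicolourable2Rel {V : Type} (A : V → V → Prop) : Prop :=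
  ∃ φ : V → Fin 2, ∀ i : Fin 2,
    AcyclicRel (fun a b => A a b ∧ φ a = i ∧ φ b = i)

/-- A digraph is 2-dicolourable if its vertices can be coloured with two colours
so that each colour class induces an acyclic subdigraph. -/
def Dicolourable2 {V : Type} (D : SimpleDigraph V) : Prop :=
  Dicolourable2Rel D.Adj

/-- `(S, A)` describes a subdigraph of `D`: its vertex set is `S` and its arcs
are given by `A`, which must join vertices of `S` and be arcs of `D`. -/
def IsSubdigraphOn {V : Type} (D : SimpleDigraph V) (S : Set V) (A : V → V → Prop) : Prop :=
  ∀ u v, A u v → u ∈ S ∧ v ∈ S ∧ D.Adj u v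

/-- `D` is 3-dicritical: `D` is not 2-dicolourable, but every proper subdigraph of `D`
(one missing a vertex or an arc) is 2-dicolourable. -/
def Dicritical3 {V : Type} (D : SimpleDigraph V) : Prop :=
  ¬ D.Dicolourable2 ∧
    ∀ (S : Set V) (A : V → V → Prop), D.IsSubdigraphOn S A →
      (S ≠ Set.univ ∨ A ≠ D.Adj) → Dicolourable2Rel A

/-- A digraph is semi-complete if any two distinct vertices are joined by at least one arc. -/
def SemiComplete {V : Type} (D : SimpleDigraph V) : Prop :=
  ∀ u v : V, u ≠ v → D.Adj u v ∨ D.Adj v u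

/-- A tournament is a semi-complete digraph with no digon. -/
def IsTournament {V : Type} (D : SimpleDigraph V) : Prop :=
  D.SemiComplete ∧ ∀ u v : V, ¬ (D.Adj u v ∧ D.Adj v u)

/-- Isomorphism of digraphs. -/
def Iso {V W : Type} (D : SimpleDigraph V) (E : SimpleDigraph W) : Prop :=
  ∃ e : V ≃ W, ∀ u v : V, D.Adj u v ↔ E.Adj (e u) (e v)

/-- `D` contains (a copy of) `H` as a subdigraph. -/
def ContainsSub {V W : Type} (D : SimpleDigraph V) (H : SimpleDigraph W) : Prop :=
  ∃ f : W → V, Function.Injective f ∧ ∀ a b, H.Adj a b → D.Adj (f a) (f b)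

/-- `D` contains (a copy of) `H` as an induced subdigraph. -/
def ContainsInduced {V W : Type} (D : SimpleDigraph V) (H : SimpleDigraph W) : Prop :=
  ∃ f : W → V, Function.Injective f ∧ ∀ a b, H.Adj a b ↔ D.Adj (f a) (f b)

end SimpleDigraph

/-- The bidirected part `B(D)` of a digraph `D`: the undirected graph on the same vertex
set in which two vertices are adjacent iff they are joined by a digon in `D`. -/
def SimpleDigraph.bidirectedPart {V : Type} (D : SimpleDigraph V) : SimpleGraph V where
  Adj u v := D.Adj u v ∧ D.Adj v u
  symm := ⟨fun _ _ h => ⟨h.2, h.1⟩⟩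
  loopless := ⟨fun v h => D.loopless v h.1⟩

/-- `D` is a bidirected odd cycle: every arc of `D` lies in a digon, and the underlying
graph of the digons is a cycle (connected and 2-regular) of odd length. -/
def SimpleDigraph.IsBidirectedOddCycle {V : Type} [Fintype V] (D : SimpleDigraph V) : Prop :=
  (∀ u v, D.Adj u v → D.Adj v u) ∧
  D.bidirectedPart.Connected ∧
  (∀ v, (D.bidirectedPart.neighborSet v).ncard = 2) ∧
  Odd (Fintype.card V)

section AuxLemmas

open SimpleGraph Walk


/-- getVert is injective on `[0, length]` for walks with nodup support. -/
lemma aux_getVert_injOn {V : Type} {G : SimpleGraph V} {u v : V} (p : G.Walk u v)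
    (hnd : p.support.Nodup) :
    ∀ i j, i ≤ p.length → j ≤ p.length → p.getVert i = p.getVert j → i = j := by
  induction p with
  | nil => intro i j hi hj _; simp at hi hj; omega
  | @cons u w v h q ih =>
    rw [Walk.support_cons, List.nodup_cons] at hnd
    intro i j hi hj hij
    rw [Walk.length_cons] at hi hj
    match i, j with
    | 0, 0 => rfl
    | 0, (j+1) =>
      exfalso
      rw [Walk.getVert_zero, Walk.getVert_cons_succ] at hij
      exact hnd.1 (Walk.mem_support_iff_exists_getVert.mpr ⟨j, hij.symm, by omega⟩)
    | (i+1), 0 =>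
      exfalso
      rw [Walk.getVert_zero, Walk.getVert_cons_succ] at hij
      exact hnd.1 (Walk.mem_support_iff_exists_getVert.mpr ⟨i, hij, by omega⟩)
    | (i+1), (j+1) =>
      rw [Walk.getVert_cons_succ, Walk.getVert_cons_succ] at hij
      have := ih hnd.2 i j (by omega) (by omega) hij
      omega

/-- alternation lemma -/
lemma aux_alt {V : Type} {G : SimpleGraph V} (φ : V → Fin 2) {a b : V} (q : G.Walk a b)
    (hsteps : ∀ d ∈ q.darts, φ d.fst ≠ φ d.snd) :
    (φ a = φ b ↔ Even q.length) := by
  induction q with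
  | nil => simp
  | @cons a c b h q ih =>
    have hne : φ a ≠ φ c := hsteps ⟨(a, c), h⟩ (by rw [Walk.darts_cons]; exact List.mem_cons_self)
    have ihh := ih (fun d hd => hsteps d (by rw [Walk.darts_cons]; exact List.mem_cons_of_mem _ hd))
    rw [Walk.length_cons, Nat.even_add_one, ← ihh]
    have fin2 : ∀ x y z : Fin 2, x ≠ y → (x = z ↔ ¬ y = z) := by decide
    exact fin2 _ _ _ hne

/-- the start vertex of a cycle has exactly two neighbours in its toSubgraph -/
lemma aux_cycle_nbr {V : Type} {G : SimpleGraph V} {u : V} (c : G.Walk u u) (hc : c.IsCycle) :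
    (c.toSubgraph.neighborSet u).ncard = 2 := by
  have hn : 3 ≤ c.length := hc.three_le_length
  have hnil : ¬ c.Nil := hc.not_nil
  have hlt : c.tail.length + 1 = c.length := Walk.length_tail_add_one hnil
  have hnd : c.tail.support.Nodup := by
    rw [Walk.support_tail_of_not_nil c hnil]; exact hc.support_nodup
  have inj := aux_getVert_injOn c.tail hnd
  have htv : ∀ i : ℕ, c.tail.getVert i = c.getVert (i + 1) := fun i => Walk.getVert_tail c
  have key1 : ∀ j, 1 ≤ j → j ≤ c.length → c.getVert j = u → j = c.length := by
    intro j h1 h2 hju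
    have e1 : c.tail.getVert (j - 1) = u := by
      rw [htv, Nat.sub_add_cancel h1]; exact hju
    have e2 : c.tail.getVert (c.length - 1) = u := by
      rw [htv, Nat.sub_add_cancel (by omega)]; exact Walk.getVert_length c
    have := inj (j - 1) (c.length - 1) (by omega) (by omega) (e1.trans e2.symm)
    omega
  have key2 : c.getVert 1 ≠ c.getVert (c.length - 1) := by
    intro hcon
    have e1 : c.tail.getVert 0 = c.getVert 1 := by rw [htv]
    have e2 : c.tail.getVert (c.length - 2) = c.getVert (c.length - 1) := by
      rw [htv]; congr 1; omega
    have := inj 0 (c.length - 2) (by omega) (by omega) (by rw [e1, e2]; exact hcon)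
    omega
  have hset : c.toSubgraph.neighborSet u = {c.getVert 1, c.getVert (c.length - 1)} := by
    ext x
    simp only [Subgraph.mem_neighborSet, Set.mem_insert_iff, Set.mem_singleton_iff]
    constructor
    · intro hadj
      obtain ⟨i, hi, hilt⟩ := (Walk.toSubgraph_adj_iff c).mp hadj
      rcases Sym2.eq_iff.mp hi with ⟨h1, h2⟩ | ⟨h1, h2⟩
      · -- getVert i = u, getVert (i+1) = x
        rcases Nat.eq_zero_or_pos i with h0 | hpos
        · left; rw [← h2, h0]
        · exfalso
          have := key1 i hpos (by omega) h1
          omega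
      · -- getVert i = x, getVert (i+1) = u
        right
        have := key1 (i + 1) (by omega) (by omega) h2
        rw [← h1]; congr 1; omega
    · intro hx
      rcases hx with hx | hx
      · have := Walk.toSubgraph_adj_getVert c (by omega : 0 < c.length)
        rw [Walk.getVert_zero, zero_add] at this
        rw [hx]; exact this
      · have := Walk.toSubgraph_adj_getVert c (by omega : c.length - 1 < c.length)
        have he : c.length - 1 + 1 = c.length := by omega
        rw [he, Walk.getVert_length] at this
        rw [hx]; exact this.symm
  rw [hset]
  exact Set.ncard_pair key2


/-- `aux_getLast_not_mem_dropLast` -/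
lemma aux_getLast_not_mem_dropLast {α : Type} (l : List α) (hne : l ≠ []) (hnd : l.Nodup) :
    l.getLast hne ∉ l.dropLast := by
  intro hmem
  have heq := List.dropLast_append_getLast hne
  rw [← heq, List.nodup_append] at hnd
  exact hnd.2.2 _ hmem _ (List.mem_singleton.mpr rfl) rfl

end AuxLemmas

/-- If `D` is a 3-dicritical digraph that is not a bidirected odd cycle,
then its bidirected part `B(D)` is a forest. -/
theorem bidirectedPart_isAcyclic
    {V : Type} [Fintype V] (D : SimpleDigraph V) (hD : D.Dicritical3)
    (hcyc : ¬ D.IsBidirectedOddCycle) :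
    D.bidirectedPart.IsAcyclic := by
  classical
  by_contra hac
  simp only [SimpleGraph.IsAcyclic] at hac
  push_neg at hac
  obtain ⟨v, p, hp⟩ := hac
  cases p with
  | nil => exact hp.ne_nil rfl
  | @cons _ w _ h q =>
    have hq_nodup : q.support.Nodup := by
      have := hp.support_nodup
      rwa [SimpleGraph.Walk.support_cons, List.tail_cons] at this
    have h3 := hp.three_le_length
    rw [SimpleGraph.Walk.length_cons] at h3
    -- Step A : the cycle has odd length
    have hodd : Odd (SimpleGraph.Walk.cons h q).length := by
      set A1 : V → V → Prop := fun a b => D.Adj a b ∧ ¬(a = v ∧ b = w) with hA1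
      have hsub : D.IsSubdigraphOn Set.univ A1 := fun a b hab => ⟨trivial, trivial, hab.1⟩
      have hne : A1 ≠ D.Adj := by
        intro heq
        have h2 : A1 v w := heq ▸ h.1
        exact h2.2 ⟨rfl, rfl⟩
      obtain ⟨φ, hφ⟩ := hD.2 Set.univ A1 hsub (Or.inr hne)
      have hvw : φ v = φ w := by
        by_contra hne2
        apply hD.1
        refine ⟨φ, fun i x hx => hφ i x (Relation.TransGen.mono ?_ x x hx)⟩
        rintro a b ⟨had, ha, hb⟩
        refine ⟨⟨had, ?_⟩, ha, hb⟩
        rintro ⟨rfl, rfl⟩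
        exact hne2 (ha.trans hb.symm)
      have halt : ∀ d ∈ q.darts, φ d.fst ≠ φ d.snd := by
        intro d hd he
        have hdig : D.Adj d.fst d.snd ∧ D.Adj d.snd d.fst := d.adj
        have h1 : ¬(d.fst = v ∧ d.snd = w) := by
          rintro ⟨hfv, -⟩
          have hvmem : v ∈ q.support.dropLast := by
            have h0 := List.mem_map_of_mem (f := fun d : SimpleGraph.Dart _ => d.fst) hd
            rw [SimpleGraph.Walk.map_fst_darts] at h0
            rwa [hfv] at h0
          have hlast : q.support.getLast (SimpleGraph.Walk.support_ne_nil q) = v :=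
            SimpleGraph.Walk.getLast_support q
          refine aux_getLast_not_mem_dropLast q.support
            (SimpleGraph.Walk.support_ne_nil q) hq_nodup ?_
          rw [hlast]; exact hvmem
        have h2 : ¬(d.snd = v ∧ d.fst = w) := by
          rintro ⟨hsv, hfw⟩
          cases q with
          | nil => exact h.ne rfl
          | @cons _ u' _ h' q' =>
            rw [SimpleGraph.Walk.darts_cons] at hd
            rcases List.mem_cons.mp hd with hd1 | hd2
            · have hu' : u' = v := by rw [← hsv, hd1]
              subst hu'
              cases q' with
              | nil => simp at h3
              | @cons _ u'' _ h'' q'' =>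
                rw [SimpleGraph.Walk.support_cons, List.nodup_cons] at hq_nodup
                have hq2 := hq_nodup.2
                rw [SimpleGraph.Walk.support_cons, List.nodup_cons] at hq2
                exact hq2.1 (SimpleGraph.Walk.end_mem_support q'')
            · have hmem' : d.fst ∈ q'.support :=
                SimpleGraph.Walk.dart_fst_mem_support_of_mem_darts q' hd2
              rw [SimpleGraph.Walk.support_cons, List.nodup_cons] at hq_nodup
              rw [hfw] at hmem'
              exact hq_nodup.1 hmem'
        have hA1f : A1 d.fst d.snd := ⟨hdig.1, h1⟩
        have hA1b : A1 d.snd d.fst := ⟨hdig.2, h2⟩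
        exact hφ (φ d.fst) d.fst (Relation.TransGen.head ⟨hA1f, rfl, he.symm⟩
          (Relation.TransGen.single ⟨hA1b, he.symm, rfl⟩))
      have heven : Even q.length := (aux_alt φ q halt).mp hvw.symm
      rw [SimpleGraph.Walk.length_cons]
      exact Even.add_one heven
    -- Step B : the bidirected cycle is a non-2-dicolourable subdigraph, hence all of D
    set S : Set V := {x | x ∈ (SimpleGraph.Walk.cons h q).support} with hS0
    set A : V → V → Prop := fun a b => (SimpleGraph.Walk.cons h q).toSubgraph.Adj a b with hA0
    have hsub : D.IsSubdigraphOn S A := by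
      intro a b hab
      exact ⟨(SimpleGraph.Walk.mem_verts_toSubgraph _).mp hab.fst_mem,
        (SimpleGraph.Walk.mem_verts_toSubgraph _).mp hab.snd_mem, hab.adj_sub.1⟩
    have hncol : ¬ SimpleDigraph.Dicolourable2Rel A := by
      rintro ⟨φ, hφ⟩
      have halt : ∀ d ∈ (SimpleGraph.Walk.cons h q).darts, φ d.fst ≠ φ d.snd := by
        intro d hd he
        have hedge : d.edge ∈ (SimpleGraph.Walk.cons h q).edges := List.mem_map_of_mem hd
        have hAd : A d.fst d.snd := by
          have := (SimpleGraph.Walk.mem_edges_toSubgraph _).mpr hedge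
          exact SimpleGraph.Subgraph.mem_edgeSet.mp this
        have hAd' : A d.snd d.fst := hAd.symm
        exact hφ (φ d.fst) d.fst (Relation.TransGen.head ⟨hAd, rfl, he.symm⟩
          (Relation.TransGen.single ⟨hAd', he.symm, rfl⟩))
      have heven := (aux_alt φ (SimpleGraph.Walk.cons h q) halt).mp rfl
      exact (Nat.not_odd_iff_even.mpr heven) hodd
    have hfull : ¬(S ≠ Set.univ ∨ A ≠ D.Adj) := fun hor => hncol (hD.2 S A hsub hor)
    push_neg at hfull
    obtain ⟨hSuniv, hAadj⟩ := hfull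
    -- Step C : D is a bidirected odd cycle, contradiction
    apply hcyc
    have hmem : ∀ x : V, x ∈ (SimpleGraph.Walk.cons h q).support := fun x =>
      Set.eq_univ_iff_forall.mp hSuniv x
    have hAadj' : ∀ a b, (SimpleGraph.Walk.cons h q).toSubgraph.Adj a b ↔ D.Adj a b :=
      fun a b => Iff.of_eq (congrFun (congrFun hAadj a) b)
    have hBadj : ∀ a b, D.bidirectedPart.Adj a b ↔ (SimpleGraph.Walk.cons h q).toSubgraph.Adj a b := by
      intro a b
      constructor
      · rintro ⟨h1, -⟩
        exact (hAadj' a b).mpr h1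
      · intro hab
        exact ⟨(hAadj' a b).mp hab, (hAadj' b a).mp hab.symm⟩
    refine ⟨?_, ?_, ?_, ?_⟩
    · intro x y hxy
      exact (hAadj' y x).mp ((hAadj' x y).mpr hxy).symm
    · have hGeq : D.bidirectedPart = (SimpleGraph.Walk.cons h q).toSubgraph.spanningCoe := by
        ext a b
        exact hBadj a b
      rw [hGeq]
      have hsp : (SimpleGraph.Walk.cons h q).toSubgraph.IsSpanning := fun x =>
        (SimpleGraph.Walk.mem_verts_toSubgraph _).mpr (hmem x)
      exact (SimpleGraph.Iso.connected_iff
        (SimpleGraph.Subgraph.spanningCoeEquivCoeOfSpanning _ hsp)).mpr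
        (SimpleGraph.Walk.toSubgraph_connected _).coe
    · intro x
      have hx : x ∈ (SimpleGraph.Walk.cons h q).support := hmem x
      have hrot := hp.rotate hx
      have hts : ((SimpleGraph.Walk.cons h q).rotate x hx).toSubgraph
          = (SimpleGraph.Walk.cons h q).toSubgraph :=
        SimpleGraph.Walk.toSubgraph_rotate _ hx
      have hnb : D.bidirectedPart.neighborSet x
          = ((SimpleGraph.Walk.cons h q).rotate x hx).toSubgraph.neighborSet x := by
        ext y
        simp only [SimpleGraph.mem_neighborSet, SimpleGraph.Subgraph.mem_neighborSet, hts]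
        exact hBadj x y
      rw [hnb]
      exact aux_cycle_nbr _ hrot
    · have hall : ∀ x : V, x ∈ q.support := by
        intro x
        have := hmem x
        rw [SimpleGraph.Walk.support_cons, List.mem_cons] at this
        rcases this with rfl | hmem2
        · exact SimpleGraph.Walk.end_mem_support q
        · exact hmem2
      have huniv : q.support.toFinset = Finset.univ :=
        Finset.eq_univ_iff_forall.mpr (fun x => List.mem_toFinset.mpr (hall x))
      have hcard : Fintype.card V = (SimpleGraph.Walk.cons h q).length := by
        rw [← Finset.card_univ, ← huniv, List.toFinset_card_of_nodup hq_nodup,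
          SimpleGraph.Walk.length_support, SimpleGraph.Walk.length_cons]
      rw [hcard]
      exact hodd
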